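/- Let D ≥ 2 and let Γ be the cycle graph on ZMod n. Let Fix(Aut) be the ℂ-subspace of functions f : (ZMod n)³ → ℂ satisfying f(g x, g y, g z) = f(x,y,z) for all graph automorphisms g of Γ and all x,y,z ∈ ZMod n. Then the dimension of Fix(Aut) over ℂ equals 2D² + 2 if n = 2D, and equals 2D² + 2D + 1 if n = 2D + 1. (This is the dimension of the fundamental module Λ of the S₃-symmetric tridiagonal algebra associated with the cycle.) -/

import Mathlib

/-- Adjacency in the cycle graph on `ZMod n`. -/
def cycAdj (n : ℕ) (x y : ZMod n) : Prop := x - y = 1 ∨ y - x = 1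

/-- The automorphism group of the cycle graph on `ZMod n`. -/
def cycAut (n : ℕ) : Subgroup (Equiv.Perm (ZMod n)) where
  carrier := {g | ∀ x y, cycAdj n (g x) (g y) ↔ cycAdj n x y}
  one_mem' := by intro x y; simp
  mul_mem' := by
    intro a b ha hb x y
    simp only [Equiv.Perm.mul_apply]
    exact (ha (b x) (b y)).trans (hb x y)
  inv_mem' := by
    intro a ha x y
    have h := ha (a⁻¹ x) (a⁻¹ y)
    simpa [Equiv.Perm.coe_inv, Equiv.apply_symm_apply] using h.symm

/-- The subspace `Fix(Aut)` of `Aut(Γ)`-invariant complex functions on triples. -/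
noncomputable def fixSubmodule (n : ℕ) : Submodule ℂ ((ZMod n × ZMod n × ZMod n) → ℂ) where
  carrier := {f | ∀ g ∈ cycAut n, ∀ x y z : ZMod n, f (g x, g y, g z) = f (x, y, z)}
  add_mem' := by intro f h hf hh g hg x y z; simp [hf g hg x y z, hh g hg x y z]
  zero_mem' := by intro g hg x y z; rfl
  smul_mem' := by intro c f hf g hg x y z; simp [hf g hg x y z]

/-!
Every automorphism of the cycle `ZMod n` (`n ≥ 3`) is affine, `x ↦ ±x + b`. Hence an
invariant function of `(x, y, z)` depends only on the pair `(y - x, z - x)` up to sign, and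
`Fix(Aut)` is the space of functions on the `±1`-orbits of `(ZMod n)²`. By Burnside there are
`(n² + t²) / 2` such orbits, where `t` is the number of `x` with `2x = 0`: `t = 2` for `n = 2D`
and `t = 1` for `n = 2D + 1`.
-/

open Module

section Automorphisms

variable {n : ℕ}

theorem addRight_mem_cycAut (b : ZMod n) : Equiv.addRight b ∈ cycAut n := fun x y => by
  simp only [Equiv.coe_addRight, cycAdj, add_sub_add_right_eq_sub]

theorem neg_mem_cycAut : Equiv.neg (ZMod n) ∈ cycAut n := fun x y => by
  simp only [Equiv.neg_apply, cycAdj, neg_sub_neg]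
  exact or_comm

theorem ZMod.two_ne_zero_of_three_le (hn : 3 ≤ n) : (2 : ZMod n) ≠ 0 := fun h => by
  have := Nat.le_of_dvd two_pos ((ZMod.natCast_eq_zero_iff 2 n).1 (by exact_mod_cast h))
  omega

variable {g : Equiv.Perm (ZMod n)}

theorem cycAut_apply_add_one_sub (hg : g ∈ cycAut n) (x : ZMod n) :
    g (x + 1) - g x = 1 ∨ g (x + 1) - g x = -1 := by
  rcases (hg x (x + 1)).2 (Or.inr (add_sub_cancel_left x 1)) with h | h
  · exact Or.inr (by linear_combination -h)
  · exact Or.inl h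

theorem cycAut_apply_add_two_sub (hn : 3 ≤ n) (hg : g ∈ cycAut n) (x : ZMod n) :
    g (x + 1 + 1) - g (x + 1) = g (x + 1) - g x := by
  by_contra hne
  have hback : g (x + 1 + 1) = g x := by
    rcases cycAut_apply_add_one_sub hg x with h₁ | h₁ <;>
      rcases cycAut_apply_add_one_sub hg (x + 1) with h₂ | h₂ <;>
      first
      | exact absurd (h₂.trans h₁.symm) hne
      | linear_combination h₁ + h₂
  exact ZMod.two_ne_zero_of_three_le hn (by linear_combination g.injective hback)

theorem cycAut_exists_units_smul_add (hn : 3 ≤ n) (hg : g ∈ cycAut n) :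
    ∃ u : ℤˣ, ∀ x, g x = u • x + g 0 := by
  have : NeZero n := ⟨by omega⟩
  have hstep : ∀ k : ℕ, g (k + 1) - g k = g 1 - g 0 := by
    intro k
    induction k with
    | zero => simp
    | succ k ih => push_cast; rw [cycAut_apply_add_two_sub hn hg, ih]
  have hnat : ∀ k : ℕ, g k = (g 1 - g 0) * k + g 0 := by
    intro k
    induction k with
    | zero => simp
    | succ k ih => push_cast; linear_combination hstep k + ih
  have haffine : ∀ x, g x = (g 1 - g 0) * x + g 0 := fun x => by
    simpa using hnat x.val
  rcases cycAut_apply_add_one_sub hg 0 with h | h <;> rw [zero_add] at h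
  · exact ⟨1, fun x => by simp [haffine x, h]⟩
  · exact ⟨-1, fun x => by simp [haffine x, h]⟩

end Automorphisms

section Orbits

variable {n : ℕ}

abbrev PairOrbits (n : ℕ) := MulAction.orbitRel.Quotient ℤˣ (ZMod n × ZMod n)

def diffClass (n : ℕ) (t : ZMod n × ZMod n × ZMod n) : PairOrbits n :=
  Quotient.mk _ (t.2.1 - t.1, t.2.2 - t.1)

theorem diffClass_surjective : Function.Surjective (diffClass n) :=
  Quotient.ind fun p => ⟨(0, p), by simp [diffClass]⟩

theorem diffClass_apply_cycAut (hn : 3 ≤ n) {g : Equiv.Perm (ZMod n)} (hg : g ∈ cycAut n)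
    (x y z : ZMod n) : diffClass n (g x, g y, g z) = diffClass n (x, y, z) := by
  obtain ⟨u, hu⟩ := cycAut_exists_units_smul_add hn hg
  have : (g y - g x, g z - g x) = u • (y - x, z - x) := by
    rw [hu x, hu y, hu z, Prod.smul_mk, smul_sub, smul_sub]
    congr 1 <;> abel
  simp only [diffClass, this]
  exact Quotient.sound ⟨u, rfl⟩

theorem fixSubmodule_eq_range (hn : 3 ≤ n) :
    fixSubmodule n = LinearMap.range (LinearMap.funLeft ℂ ℂ (diffClass n)) := by
  ext f
  constructor
  · intro hf
    have hsign : ∀ p q, MulAction.orbitRel ℤˣ (ZMod n × ZMod n) p q → f (0, p.1, p.2) = f (0, q.1, q.2) := by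
      rintro p q ⟨u, rfl⟩
      rcases Int.units_eq_one_or u with rfl | rfl
      · simp
      · simpa using hf _ neg_mem_cycAut 0 q.1 q.2
    refine ⟨Quotient.lift (fun p => f (0, p.1, p.2)) hsign, funext fun ⟨x, y, z⟩ => ?_⟩
    simpa [diffClass] using (hf _ (addRight_mem_cycAut x) 0 (y - x) (z - x)).symm
  · rintro ⟨φ, rfl⟩ g hg x y z
    exact congrArg φ (diffClass_apply_cycAut hn hg x y z)

theorem finrank_fixSubmodule (hn : 3 ≤ n) :
    finrank ℂ (fixSubmodule n) = Nat.card (PairOrbits n) := by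
  have : NeZero n := ⟨by omega⟩
  have : Fintype (PairOrbits n) := Fintype.ofFinite _
  rw [fixSubmodule_eq_range hn, LinearMap.finrank_range_of_inj
    (LinearMap.funLeft_injective_of_surjective _ _ _ diffClass_surjective),
    finrank_fintype_fun_eq_card, Nat.card_eq_fintype_card]

end Orbits

theorem card_orbitRel_units_int_mul_two (A : Type*) [AddCommGroup A] [Finite A] :
    Nat.card (MulAction.orbitRel.Quotient ℤˣ A) * 2 = Nat.card A + Nat.card {a : A | -a = a} := by
  have : Fintype A := Fintype.ofFinite A
  have : ∀ u : ℤˣ, Fintype (MulAction.fixedBy A u) := fun _ => Fintype.ofFinite _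
  have : Fintype (MulAction.orbitRel.Quotient ℤˣ A) := Fintype.ofFinite _
  have hburnside := MulAction.sum_card_fixedBy_eq_card_orbits_mul_card_group ℤˣ A
  rw [show (Finset.univ : Finset ℤˣ) = {1, -1} from rfl,
    Finset.sum_pair (by decide), Fintype.card_units_int] at hburnside
  simp only [← Nat.card_eq_fintype_card, MulAction.fixedBy_one_eq_univ, Nat.card_univ] at hburnside
  have hneg : MulAction.fixedBy A (-1 : ℤˣ) = {a : A | -a = a} := by
    ext a
    simp [MulAction.mem_fixedBy, Units.smul_def]
  rw [← hburnside, hneg]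

theorem card_neg_eq_self_prod (A B : Type*) [AddGroup A] [AddGroup B] :
    Nat.card {p : A × B | -p = p} = Nat.card {a : A | -a = a} * Nat.card {b : B | -b = b} := by
  rw [← Nat.card_prod, ← Nat.card_congr (Equiv.Set.prod _ _)]
  congr 2
  ext p
  simp [Prod.ext_iff]

theorem ZMod.card_neg_eq_self_odd (D : ℕ) : Nat.card {x : ZMod (2 * D + 1) | -x = x} = 1 := by
  suffices {x : ZMod (2 * D + 1) | -x = x} = {0} by simp [this]
  ext x
  refine ⟨fun h => ?_, fun h => by simp_all⟩
  -- `2` is invertible with inverse `D + 1`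
  have hinv : ((D : ZMod (2 * D + 1)) + 1) * 2 = 1 := by
    have h0 : (2 * D + 1 : ZMod (2 * D + 1)) = 0 := by exact_mod_cast ZMod.natCast_self _
    linear_combination h0
  simp only [Set.mem_ofPred_eq, Set.mem_singleton_iff] at h ⊢
  linear_combination (-(D : ZMod (2 * D + 1)) - 1) * h - x * hinv

theorem ZMod.card_neg_eq_self_even {D : ℕ} (hD : 1 ≤ D) :
    Nat.card {x : ZMod (2 * D) | -x = x} = 2 := by
  have : NeZero (2 * D) := ⟨by omega⟩
  have hDval : (D : ZMod (2 * D)).val = D := ZMod.val_cast_of_lt (by omega)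
  suffices {x : ZMod (2 * D) | -x = x} = {0, (D : ZMod (2 * D))} by
    rw [this, Nat.card_coe_set_eq, Set.ncard_pair]
    intro h
    have := congrArg ZMod.val h
    rw [ZMod.val_zero, hDval] at this
    omega
  ext x
  simp only [Set.mem_ofPred_eq, Set.mem_insert_iff, Set.mem_singleton_iff]
  constructor
  · intro h
    have hdvd : 2 * D ∣ 2 * x.val := by
      rw [← ZMod.natCast_eq_zero_iff, Nat.cast_mul, ZMod.natCast_zmod_val]
      linear_combination -h
    obtain ⟨c, hc⟩ := Nat.dvd_of_mul_dvd_mul_left two_pos hdvd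
    have hlt := ZMod.val_lt x
    have hc2 : c < 2 := by nlinarith
    rw [← ZMod.natCast_zmod_val x]
    interval_cases c <;> simp_all
  · rintro (rfl | rfl)
    · simp
    · have h0 : (2 * D : ZMod (2 * D)) = 0 := by exact_mod_cast ZMod.natCast_self _
      linear_combination -h0


/-- the dimension of `Fix(Aut)` (equivalently, of the fundamental module
`Λ` of the `S₃`-symmetric tridiagonal algebra of the cycle) is `2D² + 2` for the even
cycle `n = 2D` and `2D² + 2D + 1` for the odd cycle `n = 2D + 1`. -/
theorem stmt_9 (D n : ℕ) (hD : 2 ≤ D) (hn : n = 2 * D ∨ n = 2 * D + 1) :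
    Module.finrank ℂ (fixSubmodule n)
      = if n = 2 * D then 2 * D ^ 2 + 2 else 2 * D ^ 2 + 2 * D + 1 := by
  have : NeZero n := ⟨by omega⟩
  have hcard := card_orbitRel_units_int_mul_two (ZMod n × ZMod n)
  rw [card_neg_eq_self_prod, Nat.card_prod, Nat.card_zmod] at hcard
  rw [finrank_fixSubmodule (by omega)]
  rcases hn with rfl | rfl
  · rw [ZMod.card_neg_eq_self_even (by omega)] at hcard
    rw [if_pos rfl]
    linarith
  · rw [ZMod.card_neg_eq_self_odd] at hcard
    rw [if_neg (by omega)]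
    linarith
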